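/- Let p be an odd prime, Λ := ℤ_p[[S,T]], and X a Λ-module which is cyclic over the subring ℤ_p[[T]], i.e. X = ℤ_p[[T]]·x for some x ∈ X. Then for every α ∈ ℤ_p, at least one of the 𝔽_p-vector spaces X/(w_α·X + p·X) and X/(w_{−α}·X + p·X) has dimension at most 1, where w_α := (1+S)^α(1+T) − 1 ∈ Λ; equivalently, min(rank_p X/w_αX, rank_p X/w_{−α}X) ≤ 1. (This is the algebraic content of the paper's Theorem on coinvariants: identifying ℤ_p[[Gal(K/k)]] ≅ ℤ_p[[S,T]] via topological generators σ ↔ 1+S of Gal(K/k^an) and τ ↔ 1+T of Gal(K/k^cyc), the coinvariants X_{Gal(K/k_∞)} for k_∞ the fixed field of σ^ατ equal X/w_αX.) -/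

import Mathlib

open PowerSeries

/-- The two-variable power series ring `ℤ_p[[S,T]]`, realized as `(ℤ_p[[T]])[[S]]`:
the outer variable `PowerSeries.X` is `S`, the inner `ℤ_p[[T]] = PowerSeries ℤ_[p]` is the
subring of series not involving `S` (included via `PowerSeries.C`), and `T` is
`C (PowerSeries.X)`. -/
abbrev Lambda (p : ℕ) [Fact p.Prime] : Type := PowerSeries (PowerSeries ℤ_[p])

/-- `(1+S)^α := Σ_{i≥0} C(α,i) S^i ∈ ℤ_p[[S,T]]`, where `C(α,i) = Ring.choose α i ∈ ℤ_p` is the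
`p`-adic binomial coefficient `α(α−1)⋯(α−i+1)/i!`. -/
noncomputable def onePlusSPow (p : ℕ) [Fact p.Prime] (α : ℤ_[p]) : Lambda p :=
  PowerSeries.mk fun i => PowerSeries.C (R := ℤ_[p]) (Ring.choose α i)

/-- The variable `T` of `ℤ_p[[S,T]]`. -/
noncomputable def Tvar (p : ℕ) [Fact p.Prime] : Lambda p :=
  PowerSeries.C (R := PowerSeries ℤ_[p]) PowerSeries.X

/-- The ideal `I_α(f) = ((1+S)^α(1+T) − 1, S − f(T), p)` of `ℤ_p[[S,T]]`. -/
noncomputable def Ialpha (p : ℕ) [Fact p.Prime] (f : PowerSeries ℤ_[p]) (α : ℤ_[p]) :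
    Ideal (Lambda p) :=
  Ideal.span {onePlusSPow p α * (1 + Tvar p) - 1,
    PowerSeries.X - PowerSeries.C (R := PowerSeries ℤ_[p]) f, (p : Lambda p)}

lemma p_mem_Ialpha (p : ℕ) [Fact p.Prime] (f : PowerSeries ℤ_[p]) (α : ℤ_[p]) :
    (p : Lambda p) ∈ Ialpha p f α :=
  Ideal.subset_span (by simp)

/-- The dimension of `R/I` as an `𝔽_p = ZMod p` vector space, for an ideal `I` of `R`
containing `p` (so that the quotient ring is naturally an `𝔽_p`-vector space). -/
noncomputable def fpDim (p : ℕ) {R : Type} [CommRing R] (I : Ideal R)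
    (h : (p : R) ∈ I) : Cardinal :=
  letI : Module (ZMod p) (R ⧸ I) := AddCommGroup.zmodModule (fun x => by
    obtain ⟨y, rfl⟩ := Ideal.Quotient.mk_surjective x
    rw [← map_nsmul, nsmul_eq_mul]
    exact Ideal.Quotient.eq_zero_iff_mem.mpr (I.mul_mem_right y h))
  Module.rank (ZMod p) (R ⧸ I)

/-- The submodule `w·M + p·M` of a module `M` over `Λ = ℤ_p[[S,T]]`. -/
noncomputable def wpSubmodule (p : ℕ) [Fact p.Prime] (M : Type) [AddCommGroup M] [Module (Lambda p) M]
    (w : Lambda p) : Submodule (Lambda p) M :=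
  Ideal.span {w, (p : Lambda p)} • (⊤ : Submodule (Lambda p) M)

/-- `rank_p M/w·M := dim_{𝔽_p} M/(w·M + p·M)` for a module `M` over `Λ = ℤ_p[[S,T]]` and
`w ∈ Λ`; the quotient is killed by `p`, hence naturally an `𝔽_p`-vector space. -/
noncomputable def fpRankQuot (p : ℕ) [Fact p.Prime] (M : Type) [AddCommGroup M]
    [Module (Lambda p) M] (w : Lambda p) : Cardinal :=
  letI : Module (ZMod p) (M ⧸ wpSubmodule p M w) := AddCommGroup.zmodModule (fun y => by
    obtain ⟨z, rfl⟩ := Submodule.Quotient.mk_surjective _ y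
    rw [← Nat.cast_smul_eq_nsmul (Lambda p), ← Submodule.Quotient.mk_smul,
      Submodule.Quotient.mk_eq_zero]
    exact Submodule.smul_mem_smul (Ideal.subset_span (by simp)) Submodule.mem_top)
  Module.rank (ZMod p) (M ⧸ wpSubmodule p M w)

/-! Pick `f` with `S • x = f(T) • x`; as `Λ` is commutative and `X = ℤ_p[[T]] • x`, `S - f(T)`
kills `X`. If `T ∈ I_α(f)` then `T` and `p` kill `X/(w_α X + p X)`, which is therefore generated
by `x` over `ℤ_p[[T]]/(p, T) = 𝔽_p`. If `f(0)` is a unit, `S - f(T)` is a unit and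
`I_α(f) = Λ`. Otherwise `S ≡ T g(T)` modulo `(S - f(T), p)`, so `w_α ≡ T u` with `u` of constant
term `1 + α f'(0)`; since `p` is odd, `1 + α f'(0)` and `1 - α f'(0)` are not both divisible by
`p`, so `T ∈ I_α(f)` or `T ∈ I_{-α}(f)`. -/

theorem IsLocalRing.isUnit_one_add_or_isUnit_one_sub {R : Type*} [CommRing R] [IsLocalRing R]
    (h2 : IsUnit (2 : R)) (y : R) : IsUnit (1 + y) ∨ IsUnit (1 - y) :=
  IsLocalRing.isUnit_or_isUnit_of_isUnit_add (by rwa [add_add_sub_cancel, one_add_one_eq_two])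

theorem rank_le_one_of_forall_eq_nsmul {K Q : Type*} [DivisionRing K] [AddCommGroup Q]
    [Module K Q] (q : Q) (h : ∀ v : Q, ∃ n : ℕ, v = n • q) : Module.rank K Q ≤ 1 :=
  rank_le_one_iff.2 ⟨q, fun v =>
    let ⟨n, hn⟩ := h v
    ⟨n, by rw [hn, Nat.cast_smul_eq_nsmul]⟩⟩

namespace PadicInt

variable {p : ℕ} [Fact p.Prime]

theorem isUnit_two_of_odd (hp : Odd p) : IsUnit (2 : ℤ_[p]) := by
  rw [isUnit_iff, ← Nat.cast_ofNat, norm_natCast_eq_one_iff]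
  exact Nat.coprime_two_right.2 hp

theorem isUnit_iff_not_dvd {z : ℤ_[p]} : IsUnit z ↔ ¬(p : ℤ_[p]) ∣ z := by
  rw [← norm_lt_one_iff_dvd, ← not_isUnit_iff, not_not]

theorem exists_natCast_sub_mem_span_p_X (c : PowerSeries ℤ_[p]) :
    ∃ n : ℕ, c - n ∈ Ideal.span {(p : PowerSeries ℤ_[p]), X} := by
  obtain ⟨n, -, hn⟩ := exists_mem_range (constantCoeff c)
  rw [maximalIdeal_eq_span_p, Ideal.mem_span_singleton] at hn
  obtain ⟨e, he⟩ := hn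
  refine ⟨n, Ideal.mem_span_pair.2 ⟨C e, mk fun k => coeff (k + 1) c, ?_⟩⟩
  conv_rhs => rw [eq_shift_mul_X_add_const c]
  rw [← map_natCast (C (R := ℤ_[p])) n, add_sub_assoc, ← map_sub, he, map_mul, map_natCast]
  ring

end PadicInt

section

variable {p : ℕ} [Fact p.Prime]

theorem exists_onePlusSPow_eq (α : ℤ_[p]) :
    ∃ R : Lambda p, onePlusSPow p α = 1 + C (C α) * X + X ^ 2 * R := by
  have h : (X : Lambda p) ^ 2 ∣ onePlusSPow p α - 1 - C (C α) * X := by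
    rw [X_pow_dvd_iff]
    intro m hm
    interval_cases m <;> simp [onePlusSPow, coeff_one]
  obtain ⟨R, hR⟩ := h
  exact ⟨R, by linear_combination hR⟩

theorem Ialpha_eq_top_of_isUnit (f : PowerSeries ℤ_[p]) (α : ℤ_[p])
    (hf : IsUnit (constantCoeff f)) : Ialpha p f α = ⊤ := by
  refine Ideal.eq_top_of_isUnit_mem _
    (Ideal.subset_span (Set.mem_insert_of_mem _ (Set.mem_insert _ _))) ?_
  rwa [isUnit_iff_constantCoeff, map_sub, constantCoeff_X, constantCoeff_C, zero_sub,
    IsUnit.neg_iff, isUnit_iff_constantCoeff]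

theorem Tvar_mem_Ialpha {f : PowerSeries ℤ_[p]} {α : ℤ_[p]}
    (hf : (p : ℤ_[p]) ∣ constantCoeff f) (hα : IsUnit (1 + α * coeff 1 f)) :
    Tvar p ∈ Ialpha p f α := by
  obtain ⟨d, hd⟩ := hf
  obtain ⟨R, hR⟩ := exists_onePlusSPow_eq α
  set M : Lambda p := C (mk fun k => coeff (k + 1) f)
  set U : Lambda p := 1 + C (C α) * M * (1 + Tvar p) + Tvar p * M ^ 2 * R * (1 + Tvar p)
  have hU : IsUnit U := by
    rw [isUnit_iff_constantCoeff, isUnit_iff_constantCoeff]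
    simpa [U, M, Tvar] using hα
  rw [← Ideal.mul_unit_mem_iff_mem _ hU, ← Ideal.Quotient.eq_zero_iff_mem]
  set π := Ideal.Quotient.mk (Ialpha p f α)
  have hw : π (onePlusSPow p α * (1 + Tvar p) - 1) = 0 :=
    Ideal.Quotient.eq_zero_iff_mem.2 (Ideal.subset_span (by simp))
  have hS : π X = π (C f) := Ideal.Quotient.eq.2 (Ideal.subset_span (by simp))
  have hp : π p = 0 := Ideal.Quotient.eq_zero_iff_mem.2 (p_mem_Ialpha p f α)
  have hf : C f = p * C (C d) + Tvar p * M := by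
    conv_lhs => rw [eq_shift_mul_X_add_const f, hd]
    simp [M, Tvar, mul_comm, add_comm]
  -- modulo `(S - f, p)` we have `S = T * M`, and then `w_α = T * U`
  rw [hf, map_add, map_mul, hp, zero_mul, zero_add, map_mul] at hS
  rw [hR] at hw
  simp only [U, map_add, map_mul, map_sub, map_one, map_pow] at hw ⊢
  rw [hS] at hw
  linear_combination hw

theorem Tvar_mem_Ialpha_or_neg (hp : Odd p) (f : PowerSeries ℤ_[p]) (α : ℤ_[p]) :
    Tvar p ∈ Ialpha p f α ∨ Tvar p ∈ Ialpha p f (-α) := by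
  by_cases hf : (p : ℤ_[p]) ∣ constantCoeff f
  · rcases IsLocalRing.isUnit_one_add_or_isUnit_one_sub (PadicInt.isUnit_two_of_odd hp)
      (α * coeff 1 f) with h | h
    · exact .inl (Tvar_mem_Ialpha hf h)
    · exact .inr (Tvar_mem_Ialpha hf (by rwa [neg_mul, ← sub_eq_add_neg]))
  · rw [Ialpha_eq_top_of_isUnit f α (PadicInt.isUnit_iff_not_dvd.2 hf)]
    exact .inl Submodule.mem_top

section Module

variable {M : Type} [AddCommGroup M] [Module (Lambda p) M]

theorem fpRankQuot_le_one_of_forall_sub_nsmul_mem {w : Lambda p} (x : M)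
    (h : ∀ y : M, ∃ n : ℕ, y - n • x ∈ wpSubmodule p M w) : fpRankQuot p M w ≤ 1 := by
  unfold fpRankQuot
  -- the `𝔽_p`-structure is the one built inside `fpRankQuot`, so it is left to unification
  refine @rank_le_one_of_forall_eq_nsmul (ZMod p) (M ⧸ wpSubmodule p M w) _ _ ?_
    (Submodule.Quotient.mk x) fun v => ?_
  obtain ⟨y, rfl⟩ := Submodule.Quotient.mk_surjective _ v
  obtain ⟨n, hn⟩ := h y
  exact ⟨n, by rwa [← Submodule.Quotient.mk_smul, Submodule.Quotient.eq]⟩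

theorem span_le_colon_wpSubmodule (w : Lambda p) :
    Ideal.span {w, (p : Lambda p)} ≤ (wpSubmodule p M w).colon Set.univ :=
  fun _ hr => Submodule.mem_colon.2 fun _ _ => Submodule.smul_mem_smul hr Submodule.mem_top

theorem Ialpha_le_colon {f : PowerSeries ℤ_[p]} (hf : ∀ y : M, (X - C f : Lambda p) • y = 0)
    (α : ℤ_[p]) :
    Ialpha p f α ≤ (wpSubmodule p M (onePlusSPow p α * (1 + Tvar p) - 1)).colon Set.univ := by
  refine Ideal.span_le.2 ?_
  rintro r (rfl | rfl | rfl)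
  · exact span_le_colon_wpSubmodule _ (Ideal.subset_span (Set.mem_insert _ _))
  · exact Submodule.mem_colon.2 fun y _ => (hf y).symm ▸ Submodule.zero_mem _
  · exact span_le_colon_wpSubmodule _ (Ideal.subset_span (Set.mem_insert_of_mem _ rfl))

theorem fpRankQuot_le_one_of_Tvar_mem_colon (x : M)
    (hx : ∀ y : M, ∃ c : PowerSeries ℤ_[p], y = (C c : Lambda p) • x) {w : Lambda p}
    (hT : Tvar p ∈ (wpSubmodule p M w).colon Set.univ) : fpRankQuot p M w ≤ 1 := by
  refine fpRankQuot_le_one_of_forall_sub_nsmul_mem x fun y => ?_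
  obtain ⟨c, rfl⟩ := hx y
  obtain ⟨n, hn⟩ := PadicInt.exists_natCast_sub_mem_span_p_X c
  obtain ⟨a, b, hab⟩ := Ideal.mem_span_pair.1 hn
  have hp :=
    span_le_colon_wpSubmodule (M := M) w (Ideal.subset_span (Set.mem_insert_of_mem _ rfl))
  have hc : (C c - n : Lambda p) ∈ (wpSubmodule p M w).colon Set.univ := by
    rw [← map_natCast (C (R := PowerSeries ℤ_[p])), ← map_sub, ← hab, map_add, map_mul, map_mul,
      map_natCast]
    exact add_mem (Ideal.mul_mem_left _ _ hp) (Ideal.mul_mem_left _ _ hT)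
  refine ⟨n, ?_⟩
  rw [← Nat.cast_smul_eq_nsmul (Lambda p), ← sub_smul]
  exact Submodule.mem_colon.1 hc x trivial

end Module

end

/-- algebraic content of the theorem on coinvariants: for an odd prime `p`
and a `Λ = ℤ_p[[S,T]]`-module `X` which is cyclic over the subring `ℤ_p[[T]]`, for every
`α ∈ ℤ_p` at least one of the `𝔽_p`-vector spaces `X/(w_α·X + p·X)` and `X/(w_{−α}·X + p·X)`
has dimension at most `1`, where `w_α := (1+S)^α(1+T) − 1`; that is,
`min(rank_p X/w_α X, rank_p X/w_{−α} X) ≤ 1`. -/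
theorem fpRankQuot_le_one_or (p : ℕ) [Fact p.Prime] (hp : Odd p) (X : Type) [AddCommGroup X]
    [Module (Lambda p) X] (x : X)
    (hx : ∀ y : X, ∃ c : PowerSeries ℤ_[p],
      y = (PowerSeries.C (R := PowerSeries ℤ_[p]) c : Lambda p) • x)
    (α : ℤ_[p]) :
    fpRankQuot p X (onePlusSPow p α * (1 + Tvar p) - 1) ≤ 1 ∨
    fpRankQuot p X (onePlusSPow p (-α) * (1 + Tvar p) - 1) ≤ 1 := by
  obtain ⟨f, hf⟩ := hx ((PowerSeries.X : Lambda p) • x)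
  have hann : ∀ y : X, ((PowerSeries.X : Lambda p) - C f) • y = 0 := by
    intro y
    obtain ⟨c, rfl⟩ := hx y
    rw [smul_smul, mul_comm, mul_smul, sub_smul, hf, sub_self, smul_zero]
  exact (Tvar_mem_Ialpha_or_neg hp f α).imp
    (fun h => fpRankQuot_le_one_of_Tvar_mem_colon x hx (Ialpha_le_colon hann α h))
    (fun h => fpRankQuot_le_one_of_Tvar_mem_colon x hx (Ialpha_le_colon hann (-α) h))
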